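/- arXiv:2109.11944 — 2 statements merged into one kernel-verified Lean document; each statement's English description precedes it below -/
import Mathlib

section
/- Let γ > 0 and let s, u be real numbers. Then s = [s - γu]_- (where [x]_- := min(x,0)) if and only if u ≤ 0, s ≤ 0, and s·u = 0. -/
noncomputable def projNeg (x : ℝ) : ℝ := (x - |x|) / 2

theorem signorini_complementarity (γ s u : ℝ) (hγ : 0 < γ) :
    s = projNeg (s - γ * u) ↔ u ≤ 0 ∧ s ≤ 0 ∧ s * u = 0 := by
  unfold projNeg
  constructor
  · intro h
    rcases abs_cases (s - γ * u) with ⟨h1, h2⟩ | ⟨h1, h2⟩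
    · rw [h1] at h
      have hs : s = 0 := by linarith
      refine ⟨by nlinarith, by linarith, by rw [hs]; ring⟩
    · rw [h1] at h
      have hu : u = 0 := by nlinarith
      refine ⟨le_of_eq hu, by nlinarith, by rw [hu]; ring⟩
  · rintro ⟨hu, hs, hsu⟩
    rcases mul_eq_zero.mp hsu with h | h
    · rw [h]
      rcases abs_cases (0 - γ * u) with ⟨h1, h2⟩ | ⟨h1, h2⟩ <;> nlinarith
    · rw [h]
      rcases abs_cases (s - γ * 0) with ⟨h1, h2⟩ | ⟨h1, h2⟩ <;> nlinarith
end

section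
/- Let γ > 0 and s, u ∈ ℝ satisfy the complementarity conditions u ≤ 0, s ≤ 0, s·u = 0. Then for any other pair (t, v) ∈ ℝ², setting a := s - γu and b := t - γv, one has (s - [b]_-)(u - v) ≤ -(1/γ)([a]_- - [b]_-)² + (1/γ)([a]_- - [b]_-)(s - t), where [x]_- := min(x,0). -/
lemma projNeg_firm (x y : ℝ) :
    (projNeg x - projNeg y) ^ 2 ≤ (x - y) * (projNeg x - projNeg y) := by
  unfold projNeg
  rcases abs_cases x with ⟨hx, _⟩ | ⟨hx, _⟩ <;>
    rcases abs_cases y with ⟨hy, _⟩ | ⟨hy, _⟩ <;> nlinarith [abs_nonneg x, abs_nonneg y]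

theorem contact_term_estimate (γ s u : ℝ) (hγ : 0 < γ)
    (hu : u ≤ 0) (hs : s ≤ 0) (hsu : s * u = 0) (t v : ℝ) :
    (s - projNeg (t - γ * v)) * (u - v)
      ≤ -(1 / γ) * (projNeg (s - γ * u) - projNeg (t - γ * v)) ^ 2
        + (1 / γ) * (projNeg (s - γ * u) - projNeg (t - γ * v)) * (s - t) := by
  have ha : projNeg (s - γ * u) = s := by
    rcases mul_eq_zero.mp hsu with h | h
    · subst h
      unfold projNeg
      rw [abs_of_nonneg (by nlinarith : (0:ℝ) ≤ 0 - γ * u)]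
      ring
    · subst h
      unfold projNeg
      rw [mul_zero, sub_zero, abs_of_nonpos hs]
      ring
  rw [ha]
  set P := projNeg (t - γ * v) with hP
  have hf := projNeg_firm (s - γ * u) (t - γ * v)
  rw [ha, ← hP] at hf
  have key : γ * ((s - P) * (u - v)) ≤ -(s - P) ^ 2 + (s - P) * (s - t) := by
    nlinarith [hf]
  have h1 : (s - P) * (u - v) = (1 / γ) * (γ * ((s - P) * (u - v))) := by
    field_simp
  rw [h1]
  calc (1 / γ) * (γ * ((s - P) * (u - v)))
      ≤ (1 / γ) * (-(s - P) ^ 2 + (s - P) * (s - t)) := by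
        apply mul_le_mul_of_nonneg_left key (by positivity)
    _ = -(1 / γ) * (s - P) ^ 2 + (1 / γ) * (s - P) * (s - t) := by ring
end
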